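/- arXiv:2305.12754 — 2 statements merged into one kernel-verified Lean document; each statement's English description precedes it below -/
import Mathlib

section
/- The Jacobi triple product identity: for |q|<1 and x ≠ 0, ∑_{n∈ℤ} x^n q^{n(n-1)/2} = (q;q)_∞ (−x;q)_∞ (−q/x;q)_∞, where (a;q)_∞ = ∏_{j≥0}(1−a q^j). -/
open Finset Filter Complex Topology

/-- Jacobi theta function `θ_q(x) = ∑_{n ∈ ℤ} x^n q^{n(n-1)/2}`. -/
noncomputable def thetaQ (q x : ℂ) : ℂ :=
  ∑' n : ℤ, x ^ n * q ^ (n * (n - 1) / 2)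

/-- Infinite q-Pochhammer symbol `(a; q)_∞ = ∏_{j ≥ 0} (1 - a q^j)`. -/
noncomputable def qPochInf (q a : ℂ) : ℂ :=
  ∏' j : ℕ, (1 - a * q ^ j)

namespace JTP

variable {q x : ℂ}

noncomputable def gb (q : ℂ) : ℕ → ℤ → ℂ
  | 0, r => if r = 0 then 1 else 0
  | (m+1), r => gb q m (r-1) + q ^ r * gb q m r

lemma gb_zero (r : ℤ) : gb q 0 r = if r = 0 then 1 else 0 := rfl

lemma gb_succ (m : ℕ) (r : ℤ) : gb q (m+1) r = gb q m (r-1) + q ^ r * gb q m r := rfl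

lemma gb_neg (q : ℂ) (m : ℕ) : ∀ r : ℤ, r < 0 → gb q m r = 0 := by
  induction m with
  | zero => intro r hr; rw [gb_zero, if_neg (by omega)]
  | succ m ih => intro r hr; rw [gb_succ, ih (r-1) (by omega), ih r hr]; ring

lemma gb_gt (q : ℂ) (m : ℕ) : ∀ r : ℤ, (m : ℤ) < r → gb q m r = 0 := by
  induction m with
  | zero => intro r hr; rw [gb_zero, if_neg (by omega)]
  | succ m ih =>
    intro r hr
    rw [gb_succ, ih (r-1) (by push_cast at hr ⊢; omega), ih r (by push_cast at hr ⊢; omega)]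
    ring

lemma gb_zero_right (m : ℕ) : gb q m 0 = 1 := by
  induction m with
  | zero => simp [gb_zero]
  | succ m ih => rw [gb_succ, gb_neg q m _ (by omega), ih]; simp

/-- The mixed Pascal recursion. -/
lemma gb_pascal_B (hq0 : q ≠ 0) (m : ℕ) :
    ∀ r : ℤ, gb q (m+1) r = gb q m r + q ^ ((m:ℤ) + 1 - r) * gb q m (r-1) := by
  induction m with
  | zero =>
    intro r
    rcases eq_or_ne r 0 with rfl | h0
    · simp [gb_succ, gb_zero]
    rcases eq_or_ne r 1 with rfl | h1
    · norm_num [gb_succ, gb_zero]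
    · rw [gb_succ]
      simp only [gb_zero, if_neg h0, if_neg h1, if_neg (show r - 1 ≠ 0 by omega),
        Nat.cast_zero]
      ring
  | succ m ih =>
    intro r
    have d1 := ih (r-1)
    have d2 := ih r
    rw [gb_succ] at d1 d2
    rw [show ((m:ℤ) + 1 - (r - 1)) = (m:ℤ) + 2 - r by ring, show r - 1 - 1 = r - 2 by ring] at d1
    have h1 : q ^ r * q ^ ((m:ℤ) + 1 - r) = q ^ ((m:ℤ)+1) := by
      rw [← zpow_add₀ hq0]; ring_nf
    have h2 : q ^ ((m:ℤ) + 2 - r) * q ^ (r-1) = q ^ ((m:ℤ)+1) := by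
      rw [← zpow_add₀ hq0]; ring_nf
    rw [gb_succ, gb_succ, gb_succ]
    push_cast
    rw [show ((m:ℤ) + 1 + 1 - r) = (m:ℤ) + 2 - r by ring, show r - 1 - 1 = r - 2 by ring]
    linear_combination d1 + q ^ r * d2 + gb q m (r-1) * h1 - gb q m (r-1) * h2

/-- Double Pascal step used in the induction for the finite triple product. -/
lemma gb_double (hq0 : q ≠ 0) (m : ℕ) (r : ℤ) :
    gb q (m+2) r = q ^ ((m:ℤ) + 2 - r) * gb q m (r-2) + (1 + q ^ ((m:ℤ)+1)) * gb q m (r-1)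
      + q ^ r * gb q m r := by
  rw [show m + 2 = (m+1)+1 from rfl, gb_succ, gb_pascal_B hq0 m (r-1), gb_pascal_B hq0 m r]
  have h1 : q ^ r * q ^ ((m:ℤ) + 1 - r) = q ^ ((m:ℤ)+1) := by
    rw [← zpow_add₀ hq0]; ring_nf
  rw [show ((m:ℤ) + 1 - (r-1)) = (m:ℤ) + 2 - r by ring, show r - 1 - 1 = r - 2 by ring]
  linear_combination (gb q m (r-1)) * h1

/-- partial q-factorial `(q;q)_n`. -/
noncomputable def qfac (q : ℂ) (n : ℕ) : ℂ := ∏ j ∈ Finset.range n, (1 - q * q ^ j)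

lemma qfac_zero : qfac q 0 = 1 := rfl

lemma qfac_succ (n : ℕ) : qfac q (n+1) = qfac q n * (1 - q * q ^ n) :=
  Finset.prod_range_succ _ n

/-- Closed form for `gb` in multiplicative form. -/
lemma gb_mul_qfac (hq0 : q ≠ 0) : ∀ m a b : ℕ, a + b = m →
    gb q m (a:ℤ) * (qfac q a * qfac q b) = qfac q m := by
  intro m
  induction m with
  | zero =>
    intro a b h
    obtain ⟨rfl, rfl⟩ : a = 0 ∧ b = 0 := by omega
    simp [gb_zero, qfac_zero]
  | succ m ih =>
    intro a b h
    match b, a with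
    | 0, a =>
      have ha : a = m + 1 := by omega
      subst ha
      rw [gb_succ, show ((m+1:ℕ):ℤ) - 1 = (m:ℤ) by push_cast; ring,
        gb_gt q m ((m+1:ℕ):ℤ) (by exact_mod_cast lt_add_one m), qfac_zero, qfac_succ]
      have := ih m 0 (by omega)
      rw [qfac_zero] at this
      linear_combination (1 - q * q ^ m) * this
    | (b'+1), 0 =>
      obtain rfl : b' = m := by omega
      simp [gb_zero_right, qfac_zero]
    | (b'+1), (a'+1) =>
      have IH1 := ih a' (b'+1) (by omega)
      have IH2 := ih (a'+1) b' (by omega)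
      have hm : a' + b' + 1 = m := by omega
      rw [gb_succ, show ((a'+1:ℕ):ℤ) - 1 = (a':ℤ) by push_cast; ring,
        show q ^ ((a'+1:ℕ):ℤ) = q * q ^ a' by rw [zpow_natCast]; ring,
        qfac_succ a', qfac_succ b', qfac_succ m]
      rw [qfac_succ b'] at IH1
      rw [qfac_succ a'] at IH2
      have h3 : (q * q ^ a') * (q * q ^ b') = q * q ^ m := by rw [← hm]; ring
      linear_combination (1 - q * q ^ a') * IH1 + (q * q ^ a') * (1 - q * q ^ b') * IH2
        - qfac q m * h3

/-- The summand of the finite/infinite Jacobi sum. -/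
noncomputable def jt (q x : ℂ) (n : ℕ) (k : ℤ) : ℂ :=
  gb q (2*n) ((n:ℤ)+k) * (q ^ (k*(k-1)/2) * x ^ k)

noncomputable def jtA (q x : ℂ) (n : ℕ) (k : ℤ) : ℂ :=
  q ^ ((n:ℤ)+1-k) * gb q (2*n) ((n:ℤ)+k-1) * (q ^ (k*(k-1)/2) * x ^ k)

noncomputable def jtB (q x : ℂ) (n : ℕ) (k : ℤ) : ℂ :=
  (1 + q ^ (2*(n:ℤ)+1)) * gb q (2*n) ((n:ℤ)+k) * (q ^ (k*(k-1)/2) * x ^ k)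

noncomputable def jtC (q x : ℂ) (n : ℕ) (k : ℤ) : ℂ :=
  q ^ ((n:ℤ)+1+k) * gb q (2*n) ((n:ℤ)+k+1) * (q ^ (k*(k-1)/2) * x ^ k)

lemma summable_jt (n : ℕ) : Summable (jt q x n) := by
  apply summable_of_ne_finset_zero (s := Finset.Icc (-(n:ℤ)) n)
  intro k hk
  rw [Finset.mem_Icc, not_and_or, not_le, not_le] at hk
  unfold jt
  rcases hk with h | h
  · rw [gb_neg q _ _ (by push_cast; omega)]; ring
  · rw [gb_gt q _ _ (by push_cast; omega)]; ring

lemma summable_jtA (n : ℕ) : Summable (jtA q x n) := by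
  apply summable_of_ne_finset_zero (s := Finset.Icc (-(n:ℤ)) ((n:ℤ)+1))
  intro k hk
  rw [Finset.mem_Icc, not_and_or, not_le, not_le] at hk
  unfold jtA
  rcases hk with h | h
  · rw [gb_neg q _ _ (by push_cast; omega)]; ring
  · rw [gb_gt q _ _ (by push_cast; omega)]; ring

lemma summable_jtB (n : ℕ) : Summable (jtB q x n) := by
  apply summable_of_ne_finset_zero (s := Finset.Icc (-(n:ℤ)) n)
  intro k hk
  rw [Finset.mem_Icc, not_and_or, not_le, not_le] at hk
  unfold jtB
  rcases hk with h | h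
  · rw [gb_neg q _ _ (by push_cast; omega)]; ring
  · rw [gb_gt q _ _ (by push_cast; omega)]; ring

lemma summable_jtC (n : ℕ) : Summable (jtC q x n) := by
  apply summable_of_ne_finset_zero (s := Finset.Icc (-(n:ℤ)-1) n)
  intro k hk
  rw [Finset.mem_Icc, not_and_or, not_le, not_le] at hk
  unfold jtC
  rcases hk with h | h
  · rw [gb_neg q _ _ (by push_cast; omega)]; ring
  · rw [gb_gt q _ _ (by push_cast; omega)]; ring

lemma idiv1 (k : ℤ) : (k+1)*((k+1)-1)/2 = k*(k-1)/2 + k := by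
  rw [show (k+1)*((k+1)-1) = k*(k-1) + k*2 by ring, Int.add_mul_ediv_right _ _ two_ne_zero]

lemma idiv2 (k : ℤ) : (k-1)*((k-1)-1)/2 = k*(k-1)/2 - (k-1) := by
  have h : k*(k-1)/2 = (k-1)*((k-1)-1)/2 + (k-1) := by
    rw [show k*(k-1) = (k-1)*((k-1)-1) + (k-1)*2 by ring,
      Int.add_mul_ediv_right _ _ two_ne_zero]
  linarith

lemma jt_split (hq0 : q ≠ 0) (n : ℕ) (k : ℤ) :
    jt q x (n+1) k = jtA q x n k + jtB q x n k + jtC q x n k := by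
  unfold jt jtA jtB jtC
  rw [show 2*(n+1) = 2*n+2 by ring,
    show ((n+1:ℕ):ℤ) + k = ((n:ℤ)+1+k) by push_cast; ring,
    gb_double hq0 (2*n) ((n:ℤ)+1+k),
    show ((2*n:ℕ):ℤ) + 2 - ((n:ℤ)+1+k) = (n:ℤ)+1-k by push_cast; ring,
    show ((n:ℤ)+1+k) - 2 = (n:ℤ)+k-1 by ring,
    show ((2*n:ℕ):ℤ) + 1 = 2*(n:ℤ)+1 by push_cast; ring,
    show ((n:ℤ)+1+k) - 1 = (n:ℤ)+k by ring]
  ring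

lemma jtA_shift (hq0 : q ≠ 0) (hx : x ≠ 0) (n : ℕ) (k : ℤ) :
    jtA q x n (k+1) = (x * q ^ n) * jt q x n k := by
  unfold jtA jt
  rw [idiv1 k, show (n:ℤ)+1-(k+1) = (n:ℤ)-k by ring,
    show (n:ℤ)+(k+1)-1 = (n:ℤ)+k by ring,
    zpow_add₀ hq0 (k*(k-1)/2) k, zpow_add₀ hx k 1,
    show q ^ ((n:ℤ)-k) = q ^ (n:ℤ) * (q ^ k)⁻¹ by
      rw [← zpow_neg, ← zpow_add₀ hq0]; ring_nf,
    zpow_natCast, zpow_one]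
  have hqk : q ^ k ≠ 0 := zpow_ne_zero _ hq0
  field_simp

lemma jtC_shift (hq0 : q ≠ 0) (hx : x ≠ 0) (n : ℕ) (k : ℤ) :
    jtC q x n (k-1) = (q ^ (n+1) * x⁻¹) * jt q x n k := by
  unfold jtC jt
  rw [idiv2 k, show (n:ℤ)+1+(k-1) = (n:ℤ)+k by ring,
    show (n:ℤ)+(k-1)+1 = (n:ℤ)+k by ring,
    show k*(k-1)/2 - (k-1) = k*(k-1)/2 + (1-k) by ring,
    zpow_add₀ hq0 (k*(k-1)/2) (1-k), zpow_sub₀ hx k 1,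
    show q ^ ((n:ℤ)+k) = q ^ (n:ℤ) * q ^ k by rw [← zpow_add₀ hq0],
    show q ^ ((1:ℤ)-k) = q * (q ^ k)⁻¹ by
      rw [zpow_sub₀ hq0, zpow_one, div_eq_mul_inv],
    zpow_natCast, zpow_one]
  have hqk : q ^ k ≠ 0 := zpow_ne_zero _ hq0
  field_simp
  ring

lemma jtB_eq (hq0 : q ≠ 0) (n : ℕ) (k : ℤ) :
    jtB q x n k = (1 + q ^ (2*n+1)) * jt q x n k := by
  unfold jtB jt
  rw [show q ^ (2*(n:ℤ)+1) = q ^ (2*n+1) by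
    rw [show (2*(n:ℤ)+1) = ((2*n+1:ℕ):ℤ) by push_cast; ring, zpow_natCast]]
  ring

/-- The finite Jacobi triple product identity. -/
lemma finite_jtp (hq0 : q ≠ 0) (hx : x ≠ 0) (n : ℕ) :
    (∏ j ∈ range n, ((1 + x * q ^ j) * (1 + q ^ (j+1) * x⁻¹))) = ∑' k : ℤ, jt q x n k := by
  induction n with
  | zero =>
    rw [prod_range_zero, tsum_eq_single 0 ?_]
    · simp [jt, gb_zero]
    · intro k hk
      unfold jt
      rw [show 2*0 = 0 by ring, show ((0:ℕ):ℤ) + k = k by push_cast; ring,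
        gb_zero, if_neg hk]
      ring
  | succ n ih =>
    rw [prod_range_succ, ih]
    have h1 : ∑' k : ℤ, jt q x (n+1) k
        = (∑' k, jtA q x n k) + (∑' k, jtB q x n k) + (∑' k, jtC q x n k) := by
      rw [← Summable.tsum_add (summable_jtA n) (summable_jtB n),
        ← Summable.tsum_add ((summable_jtA n).add (summable_jtB n)) (summable_jtC n)]
      exact tsum_congr (jt_split hq0 n)
    have hA : (∑' k, jtA q x n k) = (x * q ^ n) * ∑' k, jt q x n k := by
      rw [← (Equiv.addRight (1:ℤ)).tsum_eq (jtA q x n), ← tsum_mul_left]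
      exact tsum_congr fun k => by
        simpa using jtA_shift hq0 hx n k
    have hC : (∑' k, jtC q x n k) = (q ^ (n+1) * x⁻¹) * ∑' k, jt q x n k := by
      rw [← (Equiv.subRight (1:ℤ)).tsum_eq (jtC q x n), ← tsum_mul_left]
      exact tsum_congr fun k => by
        simpa using jtC_shift hq0 hx n k
    have hB : (∑' k, jtB q x n k) = (1 + q ^ (2*n+1)) * ∑' k, jt q x n k := by
      rw [← tsum_mul_left]
      exact tsum_congr fun k => jtB_eq hq0 n k
    rw [h1, hA, hB, hC]
    field_simp
    ring

lemma tendsto_aqj (hq1 : ‖q‖ < 1) (a : ℂ) :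
    Tendsto (fun j : ℕ => a * q ^ j) atTop (𝓝 0) := by
  simpa using (tendsto_pow_atTop_nhds_zero_of_norm_lt_one hq1).const_mul a

lemma summable_log (hq1 : ‖q‖ < 1) (a : ℂ) (h : ∀ j : ℕ, 1 - a * q ^ j ≠ 0) :
    Summable (fun j : ℕ => Complex.log (1 - a * q ^ j)) := by
  have hg : Summable (fun j : ℕ => (3/2) * (‖a‖ * ‖q‖ ^ j)) :=
    (((summable_geometric_of_lt_one (norm_nonneg q) hq1).mul_left ‖a‖).mul_left _)
  apply Summable.of_norm_bounded_eventually hg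
  rw [Nat.cofinite_eq_atTop]
  have hev : ∀ᶠ j : ℕ in atTop, ‖a * q ^ j‖ ≤ 1/2 := by
    have := (tendsto_aqj hq1 a).norm
    simp only [norm_zero] at this
    exact this.eventually_le_const (by norm_num)
  filter_upwards [hev] with j hj
  have : ‖Complex.log (1 + -(a * q ^ j))‖ ≤ 3/2 * ‖-(a * q ^ j)‖ :=
    Complex.norm_log_one_add_half_le_self (by simpa using hj)
  simpa [sub_eq_add_neg, norm_mul, norm_pow] using this

lemma multipliable_poch (hq1 : ‖q‖ < 1) (a : ℂ) :
    Multipliable (fun j : ℕ => 1 - a * q ^ j) := by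
  by_cases h : ∀ j : ℕ, 1 - a * q ^ j ≠ 0
  · exact Complex.multipliable_of_summable_log (summable_log hq1 a h)
  · push_neg at h
    obtain ⟨j, hj⟩ := h
    refine ⟨0, ?_⟩
    rw [HasProd]
    apply tendsto_const_nhds.congr'
    filter_upwards [eventually_ge_atTop ({j} : Finset ℕ)] with s hs
    exact (Finset.prod_eq_zero (hs (Finset.mem_singleton_self j)) hj).symm

lemma tendsto_qPochInf (hq1 : ‖q‖ < 1) (a : ℂ) :
    Tendsto (fun n => ∏ j ∈ range n, (1 - a * q ^ j)) atTop (𝓝 (qPochInf q a)) :=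
  (multipliable_poch hq1 a).hasProd.tendsto_prod_nat

lemma one_sub_ne (hq1 : ‖q‖ < 1) (j : ℕ) : 1 - q * q ^ j ≠ 0 := by
  intro h
  have h1 : q * q ^ j = 1 := by linear_combination -h
  have := congrArg (‖·‖) h1
  simp only [norm_mul, norm_pow, norm_one] at this
  nlinarith [pow_le_one₀ (norm_nonneg q) hq1.le (n := j), norm_nonneg q,
    pow_nonneg (norm_nonneg q) j]

lemma qPochInf_q_ne_zero (hq1 : ‖q‖ < 1) : qPochInf q q ≠ 0 := by
  have key := Complex.cexp_tsum_eq_tprod (f := fun j => 1 - q * q ^ j)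
    (fun j => one_sub_ne hq1 j) (summable_log hq1 q (one_sub_ne hq1))
  have := key
  beta_reduce at this
  rw [qPochInf, ← this]
  exact Complex.exp_ne_zero _

lemma aux_exp {c t : ℝ} (hc1 : c < 1) (ht0 : 0 ≤ t) (htc : t ≤ c) :
    Real.exp (-(t/(1-c))) ≤ 1 - t := by
  have hc : 0 < 1 - c := by linarith
  have h1 : 1 + t/(1-c) ≤ Real.exp (t/(1-c)) := by
    have := Real.add_one_le_exp (t/(1-c))
    linarith
  have h2 : (0:ℝ) < Real.exp (t/(1-c)) := Real.exp_pos _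
  rw [Real.exp_neg, inv_le_comm₀ h2 (by linarith)]
  have ht' : 0 ≤ t * (c - t) / (1 - c) := div_nonneg (mul_nonneg ht0 (by linarith)) hc.le
  have expand : (1 + t/(1-c)) * (1 - t) = 1 + t*(c-t)/(1-c) := by field_simp; ring
  have key : (1 - t)⁻¹ ≤ 1 + t/(1-c) := by
    rw [inv_le_iff_one_le_mul₀ (show (0:ℝ) < 1 - t by linarith)]
    rw [expand]
    linarith
  linarith

lemma geom_partial_le (c : ℝ) (hc0 : 0 ≤ c) (hc1 : c < 1) (n : ℕ) :
    ∑ j ∈ range n, c ^ (j+1) ≤ c / (1-c) := by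
  have h1 : ∑ j ∈ range n, c ^ (j+1) = c * ∑ j ∈ range n, c ^ j := by
    rw [Finset.mul_sum]; exact Finset.sum_congr rfl fun j _ => by ring
  have h2 : ∑ j ∈ range n, c ^ j ≤ (1-c)⁻¹ := by
    have := Summable.sum_le_tsum (range n) (fun j _ => pow_nonneg hc0 j)
      (summable_geometric_of_lt_one hc0 hc1)
    rwa [tsum_geometric_of_lt_one hc0 hc1] at this
  rw [h1, div_eq_mul_inv]
  exact mul_le_mul_of_nonneg_left h2 hc0

lemma qfac_norm_le (hq1 : ‖q‖ < 1) (n : ℕ) :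
    ‖qfac q n‖ ≤ Real.exp (‖q‖/(1-‖q‖)) := by
  set c := ‖q‖ with hc
  have hc0 : 0 ≤ c := norm_nonneg q
  rw [qfac, norm_prod]
  calc ∏ j ∈ range n, ‖1 - q * q ^ j‖
      ≤ ∏ j ∈ range n, Real.exp (c ^ (j+1)) := by
        apply Finset.prod_le_prod (fun j _ => norm_nonneg _)
        intro j _
        calc ‖1 - q * q ^ j‖ ≤ ‖(1:ℂ)‖ + ‖q * q ^ j‖ := norm_sub_le _ _
          _ = 1 + c ^ (j+1) := by rw [norm_one, norm_mul, norm_pow, pow_succ]; ring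
          _ ≤ Real.exp (c ^ (j+1)) := by
              have := Real.add_one_le_exp (c ^ (j+1)); linarith
    _ = Real.exp (∑ j ∈ range n, c ^ (j+1)) := by rw [← Real.exp_sum]
    _ ≤ Real.exp (c/(1-c)) := Real.exp_le_exp.2 (geom_partial_le c hc0 hq1 n)

lemma qfac_norm_ge (hq1 : ‖q‖ < 1) (n : ℕ) :
    Real.exp (-(‖q‖/(1-‖q‖)/(1-‖q‖))) ≤ ‖qfac q n‖ := by
  set c := ‖q‖ with hc
  have hc0 : 0 ≤ c := norm_nonneg q
  rw [qfac, norm_prod]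
  calc Real.exp (-(c/(1-c)/(1-c)))
      ≤ Real.exp (-((∑ j ∈ range n, c ^ (j+1))/(1-c))) := by
        apply Real.exp_le_exp.2
        rw [neg_le_neg_iff]
        apply div_le_div_of_nonneg_right ?_ (by linarith)
        · exact geom_partial_le c hc0 hq1 n
    _ = ∏ j ∈ range n, Real.exp (-(c ^ (j+1)/(1-c))) := by
        rw [← Real.exp_sum]
        congr 1
        simp [neg_div, Finset.sum_div]
    _ ≤ ∏ j ∈ range n, ‖1 - q * q ^ j‖ := by
        apply Finset.prod_le_prod (fun j _ => (Real.exp_pos _).le)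
        intro j _
        have h1 : Real.exp (-(c ^ (j+1)/(1-c))) ≤ 1 - c ^ (j+1) :=
          aux_exp hq1 (pow_nonneg hc0 _)
            (by calc c ^ (j+1) ≤ c ^ 1 := pow_le_pow_of_le_one hc0 hq1.le (by omega)
                _ = c := pow_one c)
        calc Real.exp (-(c ^ (j+1)/(1-c))) ≤ 1 - c ^ (j+1) := h1
          _ ≤ ‖(1:ℂ)‖ - ‖q * q ^ j‖ := by
              rw [norm_one, norm_mul, norm_pow, pow_succ]
              have : c ^ j * c = c ^ (j+1) := by rw [pow_succ]
              linarith [this.le]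
          _ ≤ ‖1 - q * q ^ j‖ := norm_sub_norm_le _ _

/-- The uniform bound for Gaussian binomials. -/
noncomputable def Mb (q : ℂ) : ℝ :=
  Real.exp (‖q‖/(1-‖q‖)) / Real.exp (-(‖q‖/(1-‖q‖)/(1-‖q‖))) ^ 2

lemma Mb_nonneg : 0 ≤ Mb q := by unfold Mb; positivity

lemma qfac_ne_zero (hq1 : ‖q‖ < 1) (n : ℕ) : qfac q n ≠ 0 :=
  Finset.prod_ne_zero_iff.2 fun j _ => one_sub_ne hq1 j

lemma gb_bound (hq0 : q ≠ 0) (hq1 : ‖q‖ < 1) (n : ℕ) (k : ℤ) :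
    ‖gb q (2*n) ((n:ℤ)+k)‖ ≤ Mb q := by
  rcases lt_or_ge k (-(n:ℤ)) with h | h
  · rw [gb_neg q _ _ (by omega)]; simpa using Mb_nonneg
  rcases lt_or_ge (n:ℤ) k with h' | h'
  · rw [gb_gt q _ _ (by push_cast; omega)]; simpa using Mb_nonneg
  · set a := ((n:ℤ)+k).toNat with ha
    set b := ((n:ℤ)-k).toNat with hb
    have hab : a + b = 2*n := by omega
    have hcast : ((a:ℕ):ℤ) = (n:ℤ)+k := by omega
    have key := gb_mul_qfac hq0 (2*n) a b hab
    rw [hcast] at key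
    have := congrArg (‖·‖) key
    simp only [norm_mul] at this
    set B := Real.exp (-(‖q‖/(1-‖q‖)/(1-‖q‖))) with hB
    have hBpos : 0 < B := Real.exp_pos _
    have h1 : B ≤ ‖qfac q a‖ := qfac_norm_ge hq1 a
    have h2 : B ≤ ‖qfac q b‖ := qfac_norm_ge hq1 b
    have h3 : ‖qfac q (2*n)‖ ≤ Real.exp (‖q‖/(1-‖q‖)) := qfac_norm_le hq1 _
    have hg0 : 0 ≤ ‖gb q (2*n) ((n:ℤ)+k)‖ := norm_nonneg _
    rw [Mb, show B ^ 2 = B * B by ring, le_div_iff₀ (by positivity)]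
    calc ‖gb q (2*n) ((n:ℤ)+k)‖ * (B * B)
        ≤ ‖gb q (2*n) ((n:ℤ)+k)‖ * (‖qfac q a‖ * ‖qfac q b‖) := by
          apply mul_le_mul_of_nonneg_left _ hg0
          exact mul_le_mul h1 h2 hBpos.le (norm_nonneg _)
      _ = ‖qfac q (2*n)‖ := this
      _ ≤ Real.exp (‖q‖/(1-‖q‖)) := h3

lemma tendsto_qfac_comp (hq1 : ‖q‖ < 1) {g : ℕ → ℕ} (hg : Tendsto g atTop atTop) :
    Tendsto (fun n => qfac q (g n)) atTop (𝓝 (qPochInf q q)) :=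
  (tendsto_qPochInf hq1 q).comp hg

lemma tendsto_gb (hq0 : q ≠ 0) (hq1 : ‖q‖ < 1) (k : ℤ) :
    Tendsto (fun n : ℕ => gb q (2*n) ((n:ℤ)+k)) atTop (𝓝 (qPochInf q q)⁻¹) := by
  set F := qPochInf q q with hF
  have hFne : F ≠ 0 := qPochInf_q_ne_zero hq1
  have h2n : Tendsto (fun n : ℕ => qfac q (2*n)) atTop (𝓝 F) :=
    tendsto_qfac_comp hq1 (tendsto_atTop_atTop.2 fun b => ⟨b, fun n hn => by omega⟩)
  have hpk : Tendsto (fun n : ℕ => qfac q (((n:ℤ)+k).toNat)) atTop (𝓝 F) :=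
    tendsto_qfac_comp hq1
      (tendsto_atTop_atTop.2 fun b => ⟨b + k.natAbs, fun n hn => by omega⟩)
  have hmk : Tendsto (fun n : ℕ => qfac q (((n:ℤ)-k).toNat)) atTop (𝓝 F) :=
    tendsto_qfac_comp hq1
      (tendsto_atTop_atTop.2 fun b => ⟨b + k.natAbs, fun n hn => by omega⟩)
  have hmain : Tendsto (fun n : ℕ =>
      qfac q (2*n) * (qfac q (((n:ℤ)+k).toNat))⁻¹ * (qfac q (((n:ℤ)-k).toNat))⁻¹)
      atTop (𝓝 (F * F⁻¹ * F⁻¹)) :=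
    (h2n.mul (hpk.inv₀ hFne)).mul (hmk.inv₀ hFne)
  rw [show F * F⁻¹ * F⁻¹ = F⁻¹ by field_simp] at hmain
  apply hmain.congr'
  filter_upwards [eventually_ge_atTop k.natAbs] with n hn
  set a := ((n:ℤ)+k).toNat with ha
  set b := ((n:ℤ)-k).toNat with hb
  have hab : a + b = 2*n := by omega
  have hcast : ((a:ℕ):ℤ) = (n:ℤ)+k := by omega
  have key := gb_mul_qfac hq0 (2*n) a b hab
  rw [hcast] at key
  have hane : qfac q a ≠ 0 := qfac_ne_zero hq1 a
  have hbne : qfac q b ≠ 0 := qfac_ne_zero hq1 b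
  field_simp
  linear_combination -key

lemma summable_base (hq0 : q ≠ 0) (hq1 : ‖q‖ < 1) (hx : x ≠ 0) :
    Summable (fun k : ℤ => ‖q‖ ^ (k*(k-1)/2) * ‖x‖ ^ k) := by
  set c := ‖q‖ with hc
  set X := ‖x‖ with hX
  have hc0 : 0 < c := norm_pos_iff.2 hq0
  have hX0 : 0 < X := norm_pos_iff.2 hx
  set f : ℤ → ℝ := fun k => c ^ (k*(k-1)/2) * X ^ k with hf
  have hfpos : ∀ k, 0 < f k := fun k => mul_pos (zpow_pos hc0 _) (zpow_pos hX0 _)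
  apply Summable.of_nat_of_neg (f := f)
  · -- positive side
    apply summable_of_ratio_norm_eventually_le (r := 1/2) (by norm_num)
    have htend : Tendsto (fun n : ℕ => c ^ n * X) atTop (𝓝 0) := by
      simpa using (tendsto_pow_atTop_nhds_zero_of_lt_one hc0.le hq1).mul_const X
    filter_upwards [htend.eventually_le_const (show (0:ℝ) < 1/2 by norm_num)] with n hn
    have key : f ((n:ℤ)+1) = (c ^ n * X) * f (n:ℤ) := by
      rw [hf]
      simp only
      rw [idiv1 (n:ℤ), zpow_add₀ (ne_of_gt hc0), zpow_add₀ (ne_of_gt hX0),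
        zpow_natCast, zpow_natCast, zpow_one]
      ring
    rw [Real.norm_eq_abs, Real.norm_eq_abs, abs_of_pos (hfpos _),
      abs_of_pos (hfpos _), show ((n:ℤ)+1) = ((n+1:ℕ):ℤ) by push_cast; ring] at *
    rw [show f ((n+1:ℕ):ℤ) = (c ^ n * X) * f (n:ℤ) from key]
    have := (hfpos (n:ℤ)).le
    nlinarith
  · -- negative side
    apply summable_of_ratio_norm_eventually_le (r := 1/2) (by norm_num)
    have htend : Tendsto (fun n : ℕ => c ^ (n+1) * X⁻¹) atTop (𝓝 0) := by
      simpa using ((tendsto_pow_atTop_nhds_zero_of_lt_one hc0.le hq1).comp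
        (tendsto_add_atTop_nat 1)).mul_const X⁻¹
    filter_upwards [htend.eventually_le_const (show (0:ℝ) < 1/2 by norm_num)] with n hn
    have key : f (-((n:ℤ)+1)) = (c ^ (n+1) * X⁻¹) * f (-(n:ℤ)) := by
      rw [hf]
      simp only
      rw [show -((n:ℤ)+1) = (-(n:ℤ)) - 1 by ring, idiv2 (-(n:ℤ)),
        show (-(n:ℤ))*(-(n:ℤ)-1)/2 - (-(n:ℤ)-1) = (-(n:ℤ))*(-(n:ℤ)-1)/2 + ((n:ℤ)+1) by ring,
        zpow_add₀ (ne_of_gt hc0), zpow_sub₀ (ne_of_gt hX0),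
        show ((n:ℤ)+1) = ((n+1:ℕ):ℤ) by push_cast; ring, zpow_natCast, zpow_one]
      field_simp
    rw [Real.norm_eq_abs, Real.norm_eq_abs, abs_of_pos (hfpos _), abs_of_pos (hfpos _),
      show -((n:ℤ)+1) = -(((n+1:ℕ):ℤ)) by push_cast; ring] at *
    rw [show f (-((n+1:ℕ):ℤ)) = (c ^ (n+1) * X⁻¹) * f (-(n:ℤ)) from key]
    have := (hfpos (-(n:ℤ))).le
    nlinarith


end JTP

open JTP in
/-- Jacobi triple product identity:
`∑_{n ∈ ℤ} x^n q^{n(n-1)/2} = (q;q)_∞ (-x;q)_∞ (-q/x;q)_∞`. -/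
theorem jacobi_triple_product (q x : ℂ) (hq0 : q ≠ 0) (hq1 : ‖q‖ < 1)
    (hx : x ≠ 0) :
    thetaQ q x = qPochInf q q * qPochInf q (-x) * qPochInf q (-q / x) := by
  have hq1' : ‖q‖ < 1 := hq1
  set F := qPochInf q q with hF
  have hFne : F ≠ 0 := qPochInf_q_ne_zero hq1'
  -- convergence of the partial products to the two Pochhammer factors
  have hL : Tendsto (fun n => ∏ j ∈ range n, ((1 + x * q ^ j) * (1 + q ^ (j+1) * x⁻¹)))
      atTop (𝓝 (qPochInf q (-x) * qPochInf q (-q/x))) := by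
    apply ((tendsto_qPochInf hq1' (-x)).mul (tendsto_qPochInf hq1' (-q/x))).congr
    intro n
    rw [← prod_mul_distrib]
    refine Finset.prod_congr rfl fun j _ => ?_
    rw [show 1 - (-x) * q ^ j = 1 + x * q ^ j by ring]
    congr 1
    field_simp
    ring
  -- convergence of the theta partial sums
  have hR : Tendsto (fun n => ∑' k : ℤ, jt q x n k) atTop
      (𝓝 (∑' k : ℤ, F⁻¹ * (q ^ (k*(k-1)/2) * x ^ k))) := by
    apply tendsto_tsum_of_dominated_convergence
      (bound := fun k : ℤ => Mb q * (‖q‖ ^ (k*(k-1)/2) * ‖x‖ ^ k))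
    · exact (summable_base hq0 hq1' hx).mul_left _
    · exact fun k => (tendsto_gb hq0 hq1' k).mul_const _
    · apply Filter.Eventually.of_forall
      intro n k
      rw [jt, norm_mul, norm_mul, norm_zpow, norm_zpow]
      apply mul_le_mul_of_nonneg_right (gb_bound hq0 hq1' n k)
      positivity
  have heq : qPochInf q (-x) * qPochInf q (-q/x)
      = ∑' k : ℤ, F⁻¹ * (q ^ (k*(k-1)/2) * x ^ k) :=
    tendsto_nhds_unique (hL.congr fun n => finite_jtp hq0 hx n) hR
  have htheta : (∑' k : ℤ, F⁻¹ * (q ^ (k*(k-1)/2) * x ^ k)) = F⁻¹ * thetaQ q x := by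
    rw [tsum_mul_left, thetaQ]
    congr 1
    exact tsum_congr fun k => by ring
  rw [htheta] at heq
  field_simp at heq
  rw [hF] at heq ⊢
  rw [neg_div]
  linear_combination -heq
end

section
/- The function G_m(x, y) satisfies the (m+1)-th order homogeneous q-difference equation [∏_{k=1}^{m} (T_x − q^{k−1})] (T_x + x^m y^{−1}) G_m(x, y) = 0, where T_x is the q-shift operator in x: (T_x f)(x) = f(xq), and T_x acts after multiplication operators in the stated composition (i.e., (T_x + x^m y^{−1}) sends f(x) to f(xq) + x^m y^{−1} f(x), and each factor (T_x − q^{k−1}) sends g(x) to g(xq) − q^{k−1} g(x)). -/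
/-- Level-`m` Appell sum `G_m(x,y) = ∑_{n ∈ ℤ} (-1)^n y^n q^{mn(n+1)/2} / (1 - x q^n)`. -/
noncomputable def appellG (m : ℕ) (q x y : ℂ) : ℂ :=
  ∑' n : ℤ, (-1) ^ n * y ^ n * q ^ ((m : ℤ) * n * (n + 1) / 2) / (1 - x * q ^ n)

/-- Apply the product of operators `∏ (T_x - c)` (over the constants `c` in `cs`,
where `(T_x f)(x) = f(xq)`) to a function `f`. -/
noncomputable def applyProd (q : ℂ) (cs : List ℂ) (f : ℂ → ℂ) : ℂ → ℂ :=
  cs.foldr (fun c g => fun x => g (x * q) - c * g x) f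

open Filter Topology

/-! ### Auxiliary integer-division lemmas -/

private lemma AG.ediv_succ (n : ℤ) : (n + 1) * n / 2 = n * (n - 1) / 2 + n := by
  have h : (n + 1) * n = n * (n - 1) + n * 2 := by ring
  rw [h, Int.add_mul_ediv_right _ _ (by norm_num : (2:ℤ) ≠ 0)]

private lemma AG.ediv_fact (m : ℕ) (n : ℤ) :
    (m:ℤ) * n * (n - 1) / 2 = (m:ℤ) * (n * (n - 1) / 2) := by
  obtain ⟨t, ht⟩ := Int.even_mul_succ_self (n - 1)
  rw [sub_add_cancel] at ht
  have h1 : n * (n - 1) = 2 * t := by rw [mul_comm]; omega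
  have h2 : (m:ℤ) * n * (n - 1) = 2 * ((m:ℤ) * t) := by rw [mul_assoc, h1]; ring
  rw [h1, h2, Int.mul_ediv_cancel_left _ (by norm_num), Int.mul_ediv_cancel_left _ (by norm_num)]

private lemma AG.ediv_split (m : ℕ) (n : ℤ) :
    (m:ℤ) * n * (n + 1) / 2 = (m:ℤ) * n * (n - 1) / 2 + (m:ℤ) * n := by
  have h : (m:ℤ) * n * (n + 1) = (m:ℤ) * n * (n - 1) + ((m:ℤ) * n) * 2 := by ring
  rw [h, Int.add_mul_ediv_right _ _ (by norm_num : (2:ℤ) ≠ 0)]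

/-! ### Summability of quadratic-exponent series over ℤ -/

private lemma AG.summable_int_quad (r s : ℝ) (hr : 0 < r) (hs0 : 0 < s) (hs1 : s < 1) :
    Summable (fun n : ℤ => r ^ n * s ^ (n * (n - 1) / 2)) := by
  set f : ℤ → ℝ := fun n => r ^ n * s ^ (n * (n - 1) / 2) with hf
  have hfpos : ∀ n : ℤ, 0 < f n := fun n =>
    mul_pos (zpow_pos hr n) (zpow_pos hs0 _)
  have key : ∀ n : ℤ, f (n + 1) = (r * s ^ n) * f n := by
    intro n
    rw [hf]
    simp only
    rw [show (n+1) * ((n+1) - 1) / 2 = (n+1) * n / 2 by ring_nf, AG.ediv_succ,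
      zpow_add₀ (ne_of_gt hs0), zpow_add₀ (ne_of_gt hr), zpow_one]
    ring
  apply Summable.of_nat_of_neg
  · apply summable_of_ratio_test_tendsto_lt_one (l := 0) one_pos
    · exact Eventually.of_forall fun n => (hfpos n).ne'
    · have h1 : ∀ n : ℕ, ‖f ((n:ℤ) + 1)‖ / ‖f (n:ℤ)‖ = r * s ^ n := by
        intro n
        rw [key, norm_mul, mul_div_assoc, div_self (norm_ne_zero_iff.mpr (hfpos _).ne'), mul_one,
          Real.norm_of_nonneg (by positivity), zpow_natCast]
      have h2 : Tendsto (fun n : ℕ => r * s ^ n) atTop (𝓝 (r * 0)) :=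
        (tendsto_pow_atTop_nhds_zero_of_lt_one hs0.le hs1).const_mul r
      rw [mul_zero] at h2
      refine h2.congr fun n => ?_
      rw [← h1 n]
      norm_num
  · apply summable_of_ratio_test_tendsto_lt_one (l := 0) one_pos
    · exact Eventually.of_forall fun n => (hfpos _).ne'
    · have key2 : ∀ n : ℕ, f (-((n:ℤ) + 1)) = (r⁻¹ * s ^ (n + 1)) * f (-(n:ℤ)) := by
        intro n
        have h := key (-((n:ℤ) + 1))
        rw [show -((n:ℤ)+1) + 1 = -(n:ℤ) by ring] at h
        rw [h, zpow_neg]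
        have hsne : s ^ ((n:ℤ)+1) ≠ 0 := (zpow_pos hs0 _).ne'
        have hcast : s ^ (n+1 : ℕ) = s ^ ((n:ℤ)+1) := by
          rw [← zpow_natCast]; push_cast; ring_nf
        rw [hcast]
        field_simp
      have h1 : ∀ n : ℕ, ‖f (-((n:ℤ) + 1))‖ / ‖f (-(n:ℤ))‖ = r⁻¹ * s ^ (n + 1) := by
        intro n
        rw [key2, norm_mul, mul_div_assoc, div_self (norm_ne_zero_iff.mpr (hfpos _).ne'), mul_one,
          Real.norm_of_nonneg (by positivity)]
      have h2 : Tendsto (fun n : ℕ => r⁻¹ * s ^ (n + 1)) atTop (𝓝 (r⁻¹ * 0)) := by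
        have := (tendsto_pow_atTop_nhds_zero_of_lt_one hs0.le hs1).comp
          (tendsto_add_atTop_nat 1)
        exact this.const_mul r⁻¹
      rw [mul_zero] at h2
      refine h2.congr fun n => ?_
      rw [← h1 n]
      push_cast
      norm_num

/-! ### Uniform bound on `‖(1 - x q^n)⁻¹‖` -/

private lemma AG.bounded_inv (q x : ℂ) (hq0 : q ≠ 0) (hq1 : ‖q‖ < 1) (hx : x ≠ 0) :
    ∃ D : ℝ, 0 ≤ D ∧ ∀ n : ℤ, ‖(1 - x * q ^ n)⁻¹‖ ≤ D := by
  set g : ℤ → ℝ := fun n => ‖(1 - x * q ^ n)⁻¹‖ with hg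
  have hq0' : (0:ℝ) < ‖q‖ := norm_pos_iff.mpr hq0
  obtain ⟨N, hN⟩ : ∃ N : ℕ, ‖x‖ * ‖q‖ ^ N < 1/2 := by
    have hx' : (0:ℝ) < ‖x‖ := norm_pos_iff.mpr hx
    obtain ⟨N, hN⟩ := exists_pow_lt_of_lt_one (x := (1/2) / ‖x‖)
      (by positivity) hq1
    exact ⟨N, by rwa [lt_div_iff₀ (norm_pos_iff.mpr hx), mul_comm] at hN⟩
  have htop : ∀ n : ℤ, (N:ℤ) ≤ n → g n ≤ 2 := by
    intro n hn
    have h1 : ‖x * q ^ n‖ ≤ 1/2 := by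
      rw [norm_mul, norm_zpow]
      calc ‖x‖ * ‖q‖ ^ n ≤ ‖x‖ * ‖q‖ ^ (N:ℤ) := by
            exact mul_le_mul_of_nonneg_left
              (zpow_le_zpow_right_of_le_one₀ hq0' hq1.le hn) (norm_nonneg x)
        _ ≤ 1/2 := by rw [zpow_natCast]; exact hN.le
    have h2 : (1:ℝ)/2 ≤ ‖1 - x * q ^ n‖ := by
      have := norm_sub_norm_le (1:ℂ) (x * q ^ n)
      simp only [norm_one] at this
      linarith
    rw [hg]
    simp only [norm_inv]
    rw [inv_le_comm₀ (by linarith) (by norm_num)]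
    linarith
  obtain ⟨M, hM⟩ : ∃ M : ℕ, 2 < ‖x‖ * (‖q‖⁻¹) ^ M := by
    obtain ⟨M, hM⟩ := pow_unbounded_of_one_lt (2 / ‖x‖)
      (one_lt_inv₀ hq0' |>.mpr hq1)
    exact ⟨M, by rwa [div_lt_iff₀ (norm_pos_iff.mpr hx), mul_comm] at hM⟩
  have hbot : ∀ n : ℤ, n ≤ -(M:ℤ) → g n ≤ 1 := by
    intro n hn
    have h1 : (2:ℝ) ≤ ‖x * q ^ n‖ := by
      rw [norm_mul, norm_zpow]
      have step : ‖x‖ * ‖q‖ ^ (-(M:ℤ)) ≤ ‖x‖ * ‖q‖ ^ n := by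
        have hmono : ‖q‖ ^ n ≥ ‖q‖ ^ (-(M:ℤ)) :=
          zpow_le_zpow_right_of_le_one₀ hq0' hq1.le hn
        exact mul_le_mul_of_nonneg_left hmono (norm_nonneg x)
      have heq : ‖x‖ * ‖q‖⁻¹ ^ M = ‖x‖ * ‖q‖ ^ (-(M:ℤ)) := by
        rw [zpow_neg, zpow_natCast, inv_pow]
      linarith [hM, heq ▸ hM]
    have h2 : (1:ℝ) ≤ ‖1 - x * q ^ n‖ := by
      have := norm_sub_norm_le (x * q ^ n) (1:ℂ)
      rw [← norm_neg (x * q ^ n - 1), neg_sub] at this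
      simp only [norm_one] at this
      linarith
    rw [hg]
    simp only [norm_inv]
    rw [inv_le_one_iff₀]
    right; exact h2
  have hfin : (Set.Icc (-(M:ℤ)) (N:ℤ)).Finite := Set.finite_Icc _ _
  obtain ⟨C, hC⟩ : BddAbove (g '' Set.Icc (-(M:ℤ)) (N:ℤ)) := (hfin.image g).bddAbove
  refine ⟨max 2 (max C 0), le_max_of_le_left (by norm_num), fun n => ?_⟩
  rcases le_or_gt n (-(M:ℤ)) with h | h
  · exact le_trans (le_trans (hbot n h) (by norm_num)) (le_max_left _ _)
  rcases le_or_gt (N:ℤ) n with h' | h'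
  · exact le_trans (htop n h') (le_max_left _ _)
  · have hmem : g n ∈ g '' Set.Icc (-(M:ℤ)) (N:ℤ) := ⟨n, ⟨h.le, h'.le⟩, rfl⟩
    exact le_trans (hC hmem) (le_trans (le_max_left C 0) (le_max_right _ _))

/-! ### Norm computations and summability of the series -/

private lemma AG.norm_term_eq (q v : ℂ) (hq0 : q ≠ 0) (m k : ℕ) (n : ℤ) :
    ‖(-1:ℂ) ^ n * v ^ n * q ^ ((k:ℤ) * n + (m:ℤ) * n * (n - 1) / 2)‖
      = (‖v‖ * ‖q‖ ^ k) ^ n * (‖q‖ ^ m) ^ (n * (n - 1) / 2) := by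
  have hq : ‖q‖ ≠ 0 := norm_ne_zero_iff.mpr hq0
  rw [norm_mul, norm_mul, norm_zpow, norm_zpow, norm_zpow, norm_neg, norm_one, one_zpow, one_mul,
    zpow_add₀ hq, AG.ediv_fact, zpow_mul ‖q‖ (k:ℤ) n, zpow_mul ‖q‖ (m:ℤ), zpow_natCast,
    zpow_natCast, mul_zpow]
  ring

private lemma AG.summable_theta (q v : ℂ) (hq0 : q ≠ 0) (hq1 : ‖q‖ < 1) (hv : v ≠ 0)
    (m : ℕ) (hm : 0 < m) (k : ℕ) :
    Summable (fun n : ℤ => (-1:ℂ) ^ n * v ^ n * q ^ ((k:ℤ) * n + (m:ℤ) * n * (n - 1) / 2)) := by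
  have hq : (0:ℝ) < ‖q‖ := norm_pos_iff.mpr hq0
  have hr : (0:ℝ) < ‖v‖ * ‖q‖ ^ k := by
    have := norm_pos_iff.mpr hv; positivity
  have hs1 : ‖q‖ ^ m < 1 := pow_lt_one₀ (norm_nonneg q) hq1 hm.ne'
  apply Summable.of_norm_bounded (AG.summable_int_quad _ _ hr (by positivity) hs1)
  exact fun n => le_of_eq (AG.norm_term_eq q v hq0 m k n)

private lemma AG.summable_G (m : ℕ) (hm : 0 < m) (q x y : ℂ) (hq0 : q ≠ 0) (hq1 : ‖q‖ < 1)
    (hy : y ≠ 0) (hx : x ≠ 0) :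
    Summable (fun n : ℤ =>
      (-1:ℂ) ^ n * y ^ n * q ^ ((m:ℤ) * n * (n + 1) / 2) / (1 - x * q ^ n)) := by
  obtain ⟨D, hD0, hD⟩ := AG.bounded_inv q x hq0 hq1 hx
  have hq : (0:ℝ) < ‖q‖ := norm_pos_iff.mpr hq0
  have hr : (0:ℝ) < ‖y‖ * ‖q‖ ^ m := by
    have := norm_pos_iff.mpr hy; positivity
  have hs1 : ‖q‖ ^ m < 1 := pow_lt_one₀ (norm_nonneg q) hq1 hm.ne'
  apply Summable.of_norm_bounded
    (g := fun n : ℤ => D * ((‖y‖ * ‖q‖ ^ m) ^ n * (‖q‖ ^ m) ^ (n * (n - 1) / 2)))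
    ((AG.summable_int_quad _ _ hr (by positivity) hs1).mul_left D)
  intro n
  have hnum : ‖(-1:ℂ) ^ n * y ^ n * q ^ ((m:ℤ) * n * (n + 1) / 2)‖
      = (‖y‖ * ‖q‖ ^ m) ^ n * (‖q‖ ^ m) ^ (n * (n - 1) / 2) := by
    rw [AG.ediv_split, add_comm]
    exact AG.norm_term_eq q y hq0 m m n
  rw [div_eq_mul_inv, norm_mul]
  calc ‖(-1:ℂ) ^ n * y ^ n * q ^ ((m:ℤ) * n * (n + 1) / 2)‖ * ‖(1 - x * q ^ n)⁻¹‖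
      ≤ ‖(-1:ℂ) ^ n * y ^ n * q ^ ((m:ℤ) * n * (n + 1) / 2)‖ * D :=
        mul_le_mul_of_nonneg_left (hD n) (norm_nonneg _)
    _ = D * ((‖y‖ * ‖q‖ ^ m) ^ n * (‖q‖ ^ m) ^ (n * (n - 1) / 2)) := by rw [hnum]; ring

/-! ### The pointwise algebraic identity -/

private lemma AG.pointwise (m : ℕ) (q y x : ℂ) (hq0 : q ≠ 0) (hy : y ≠ 0)
    (hxq : ∀ n : ℤ, x * q ^ n ≠ 1) (n : ℤ) :
    y * ((-1:ℂ) ^ (n-1) * y ^ (n-1) * q ^ ((m:ℤ) * (n-1) * ((n-1) + 1) / 2)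
        / (1 - x * q * q ^ (n-1)))
      + x ^ m * ((-1:ℂ) ^ n * y ^ n * q ^ ((m:ℤ) * n * (n + 1) / 2) / (1 - x * q ^ n))
    = -∑ k ∈ Finset.range m,
        x ^ k * ((-1:ℂ) ^ n * y ^ n * q ^ ((k:ℤ) * n + (m:ℤ) * n * (n - 1) / 2)) := by
  have hqn : x * q * q ^ (n-1) = x * q ^ n := by
    rw [mul_assoc, ← zpow_one_add₀ hq0]
    norm_num
  have hE1 : (m:ℤ) * (n-1) * ((n-1) + 1) / 2 = (m:ℤ) * n * (n - 1) / 2 := by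
    rw [show (m:ℤ) * (n-1) * ((n-1) + 1) = (m:ℤ) * n * (n - 1) by ring]
  have hE2 : (m:ℤ) * n * (n + 1) / 2 = (m:ℤ) * n * (n - 1) / 2 + (m:ℤ) * n := AG.ediv_split m n
  have hm1 : (-1:ℂ) ^ (n-1) = -(-1:ℂ) ^ n := by
    rw [zpow_sub₀ (by norm_num : (-1:ℂ) ≠ 0), zpow_one]
    ring
  have hy1 : y ^ (n-1) = y ^ n * y⁻¹ := by
    rw [zpow_sub₀ hy, zpow_one, div_eq_mul_inv]
  have hqmn : q ^ ((m:ℤ) * n * (n - 1) / 2 + (m:ℤ) * n)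
      = q ^ ((m:ℤ) * n * (n - 1) / 2) * (q ^ n) ^ m := by
    rw [zpow_add₀ hq0]
    congr 1
    rw [mul_comm (m:ℤ) n, zpow_mul, zpow_natCast]
  have hd : (1 : ℂ) - x * q ^ n ≠ 0 := sub_ne_zero.mpr (Ne.symm (hxq n))
  have hterm : ∀ k ∈ Finset.range m,
      x ^ k * ((-1:ℂ) ^ n * y ^ n * q ^ ((k:ℤ) * n + (m:ℤ) * n * (n - 1) / 2))
      = ((-1:ℂ) ^ n * y ^ n * q ^ ((m:ℤ) * n * (n - 1) / 2)) * (x * q ^ n) ^ k := by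
    intro k _
    rw [zpow_add₀ hq0, mul_comm (k:ℤ) n, zpow_mul, zpow_natCast, mul_pow]
    ring
  rw [hqn, hE1, hE2, hm1, hy1, hqmn, Finset.sum_congr rfl hterm, ← Finset.mul_sum]
  set P := (-1:ℂ) ^ n * y ^ n * q ^ ((m:ℤ) * n * (n - 1) / 2) with hP
  set d := x * q ^ n with hdd
  set S := ∑ k ∈ Finset.range m, d ^ k with hS
  have hgeom : S * (d - 1) = d ^ m - 1 := geom_sum_mul d m
  have e1 : y * (-(-1:ℂ) ^ n * (y ^ n * y⁻¹) * q ^ ((m:ℤ) * n * (n - 1) / 2) / (1 - d))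
      = -P / (1 - d) := by
    rw [hP]; field_simp
  have e2 : x ^ m * ((-1:ℂ) ^ n * y ^ n * (q ^ ((m:ℤ) * n * (n - 1) / 2) * (q ^ n) ^ m) / (1 - d))
      = P * d ^ m / (1 - d) := by
    rw [hP, hdd, mul_pow]; ring
  rw [e1, e2, ← add_div, div_eq_iff hd]
  linear_combination (-P) * hgeom

private lemma AG.pseudo (m : ℕ) (hm : 0 < m) (q y x : ℂ) (hq0 : q ≠ 0) (hq1 : ‖q‖ < 1)
    (hy : y ≠ 0) (hx : x ≠ 0) (hxq : ∀ n : ℤ, x * q ^ n ≠ 1) :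
    appellG m q (x * q) y + x ^ m * y⁻¹ * appellG m q x y
      = ∑ k ∈ Finset.range m, x ^ k *
          (-y⁻¹ * ∑' n : ℤ, (-1:ℂ) ^ n * y ^ n * q ^ ((k:ℤ) * n + (m:ℤ) * n * (n - 1) / 2)) := by
  have hxq1 : ∀ n : ℤ, (x * q) * q ^ n ≠ 1 := by
    intro n
    rw [mul_assoc, ← zpow_one_add₀ hq0]
    exact hxq (1 + n)
  have hG1 : Summable (fun n : ℤ =>
      (-1:ℂ) ^ n * y ^ n * q ^ ((m:ℤ) * n * (n + 1) / 2) / (1 - (x * q) * q ^ n)) :=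
    AG.summable_G m hm q (x * q) y hq0 hq1 hy (mul_ne_zero hx hq0)
  have hG0 : Summable (fun n : ℤ =>
      (-1:ℂ) ^ n * y ^ n * q ^ ((m:ℤ) * n * (n + 1) / 2) / (1 - x * q ^ n)) :=
    AG.summable_G m hm q x y hq0 hq1 hy hx
  have hG1' : Summable (fun n : ℤ =>
      (-1:ℂ) ^ (n-1) * y ^ (n-1) * q ^ ((m:ℤ) * (n-1) * ((n-1) + 1) / 2)
        / (1 - (x * q) * q ^ (n-1))) := by
    have := (Equiv.subRight (1:ℤ)).summable_iff.mpr hG1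
    exact this
  have hu : Summable (fun n : ℤ => y *
      ((-1:ℂ) ^ (n-1) * y ^ (n-1) * q ^ ((m:ℤ) * (n-1) * ((n-1) + 1) / 2)
        / (1 - (x * q) * q ^ (n-1)))) := hG1'.mul_left y
  have hv : Summable (fun n : ℤ => x ^ m *
      ((-1:ℂ) ^ n * y ^ n * q ^ ((m:ℤ) * n * (n + 1) / 2) / (1 - x * q ^ n))) := hG0.mul_left _
  have main : y * appellG m q (x * q) y + x ^ m * appellG m q x y
      = -∑ k ∈ Finset.range m, x ^ k *
          ∑' n : ℤ, (-1:ℂ) ^ n * y ^ n * q ^ ((k:ℤ) * n + (m:ℤ) * n * (n - 1) / 2) := by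
    have step1 : y * appellG m q (x * q) y
        = ∑' n : ℤ, y * ((-1:ℂ) ^ (n-1) * y ^ (n-1) * q ^ ((m:ℤ) * (n-1) * ((n-1) + 1) / 2)
            / (1 - (x * q) * q ^ (n-1))) := by
      rw [tsum_mul_left]
      congr 1
      exact ((Equiv.subRight (1:ℤ)).tsum_eq _).symm
    have step2 : x ^ m * appellG m q x y
        = ∑' n : ℤ, x ^ m *
            ((-1:ℂ) ^ n * y ^ n * q ^ ((m:ℤ) * n * (n + 1) / 2) / (1 - x * q ^ n)) := by
      rw [tsum_mul_left]; rfl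
    rw [step1, step2, ← Summable.tsum_add hu hv]
    have hpt : ∀ n : ℤ, y * ((-1:ℂ) ^ (n-1) * y ^ (n-1) * q ^ ((m:ℤ) * (n-1) * ((n-1) + 1) / 2)
            / (1 - (x * q) * q ^ (n-1)))
          + x ^ m * ((-1:ℂ) ^ n * y ^ n * q ^ ((m:ℤ) * n * (n + 1) / 2) / (1 - x * q ^ n))
        = -∑ k ∈ Finset.range m,
            x ^ k * ((-1:ℂ) ^ n * y ^ n * q ^ ((k:ℤ) * n + (m:ℤ) * n * (n - 1) / 2)) := by
      intro n
      exact AG.pointwise m q y x hq0 hy hxq n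
    rw [tsum_congr hpt, tsum_neg]
    congr 1
    rw [Summable.tsum_finsetSum (fun k _ => (AG.summable_theta q y hq0 hq1 hy m hm k).mul_left (x ^ k))]
    exact Finset.sum_congr rfl fun k _ => tsum_mul_left
  have expand : appellG m q (x * q) y + x ^ m * y⁻¹ * appellG m q x y
      = y⁻¹ * (y * appellG m q (x * q) y + x ^ m * appellG m q x y) := by
    field_simp
  rw [expand, main, mul_neg, Finset.mul_sum]
  rw [← Finset.sum_neg_distrib]
  exact Finset.sum_congr rfl fun k _ => by ring
/-! ### The operator calculus -/

private lemma AG.applyProd_cons (q c : ℂ) (cs : List ℂ) (f : ℂ → ℂ) (x : ℂ) :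
    applyProd q (c :: cs) f x = applyProd q cs f (x * q) - c * applyProd q cs f x := rfl

private lemma AG.applyProd_congr (q : ℂ) (cs : List ℂ) (f g : ℂ → ℂ) (x : ℂ)
    (h : ∀ j : ℕ, f (x * q ^ j) = g (x * q ^ j)) :
    applyProd q cs f x = applyProd q cs g x := by
  induction cs generalizing x with
  | nil =>
      have := h 0
      simpa [applyProd] using this
  | cons c cs ih =>
      rw [AG.applyProd_cons, AG.applyProd_cons, ih x h, ih (x * q) ?_]
      intro j
      rw [show (x * q) * q ^ j = x * q ^ (j + 1) by ring]
      exact h (j + 1)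

private lemma AG.applyProd_sum (q : ℂ) (cs : List ℂ) (s : Finset ℕ) (F : ℕ → ℂ → ℂ) (x : ℂ) :
    applyProd q cs (fun z => ∑ k ∈ s, F k z) x = ∑ k ∈ s, applyProd q cs (F k) x := by
  induction cs generalizing x with
  | nil => rfl
  | cons c cs ih =>
      rw [AG.applyProd_cons, ih, ih, Finset.mul_sum, ← Finset.sum_sub_distrib]
      exact Finset.sum_congr rfl fun k _ => rfl

private lemma AG.applyProd_monomial (q : ℂ) (cs : List ℂ) (k : ℕ) (A : ℂ) (x : ℂ) :
    applyProd q cs (fun z => z ^ k * A) x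
      = (cs.map (fun c => q ^ k - c)).prod * (x ^ k * A) := by
  induction cs generalizing x with
  | nil => simp [applyProd]
  | cons c cs ih =>
      rw [AG.applyProd_cons, ih, ih, List.map_cons, List.prod_cons]
      ring


/-- `G_m(x,y)` satisfies the `(m+1)`-th order homogeneous q-difference equation
`[∏_{k=1}^{m} (T_x - q^{k-1})] (T_x + x^m y⁻¹) G_m(x, y) = 0`. -/
theorem appellG_qdifference_equation (m : ℕ) (hm : 0 < m) (q y : ℂ)
    (hq0 : q ≠ 0) (hq1 : ‖q‖ < 1) (hy : y ≠ 0) (x : ℂ) (hx : x ≠ 0)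
    (hxq : ∀ n : ℤ, x * q ^ n ≠ 1) :
    applyProd q ((List.range m).map fun k => q ^ k)
      (fun z => appellG m q (z * q) y + z ^ m * y⁻¹ * appellG m q z y) x = 0 := by
  have hq1' : ‖q‖ < 1 := hq1
  set c : ℕ → ℂ := fun k =>
    -y⁻¹ * ∑' n : ℤ, (-1:ℂ) ^ n * y ^ n * q ^ ((k:ℤ) * n + (m:ℤ) * n * (n - 1) / 2) with hc
  have hcongr : applyProd q ((List.range m).map fun k => q ^ k)
      (fun z => appellG m q (z * q) y + z ^ m * y⁻¹ * appellG m q z y) x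
      = applyProd q ((List.range m).map fun k => q ^ k)
        (fun z => ∑ k ∈ Finset.range m, z ^ k * c k) x := by
    apply AG.applyProd_congr
    intro j
    have hz0 : x * q ^ j ≠ 0 := mul_ne_zero hx (pow_ne_zero j hq0)
    have hzq : ∀ n : ℤ, (x * q ^ j) * q ^ n ≠ 1 := by
      intro n
      rw [show (x * q ^ j : ℂ) = x * q ^ (j:ℤ) by rw [zpow_natCast], mul_assoc,
        ← zpow_add₀ hq0]
      exact hxq _
    exact AG.pseudo m hm q y (x * q ^ j) hq0 hq1' hy hz0 hzq
  rw [hcongr, AG.applyProd_sum]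
  apply Finset.sum_eq_zero
  intro k hk
  rw [AG.applyProd_monomial]
  have hzero : (0:ℂ) ∈ (((List.range m).map fun k => q ^ k).map fun cc => q ^ k - cc) := by
    rw [List.map_map]
    refine List.mem_map.mpr ⟨k, List.mem_range.mpr (Finset.mem_range.mp hk), ?_⟩
    simp
  rw [List.prod_eq_zero hzero, zero_mul]
end
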